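/- arXiv:1610.05935 — 7 statements merged into one kernel-verified Lean document; each statement's English description precedes it below -/
import Mathlib

section
/- Jacobi's identity for complementary minors: for any invertible n×n matrix A over a commutative ring R and any subsets I, J ⊆ {1,…,n} of the same cardinality, det((A⁻¹)[I,J]) · det(A) = (−1)^(Σ_{r∈I} r + Σ_{c∈J} c) · det(A[Jᶜ, Iᶜ]), where M[I,J] denotes the submatrix with rows indexed by I and columns by J, and Iᶜ, Jᶜ are the complements. -/
open Finset Equiv Matrix

section JacobiAux

variable {n : ℕ}




/-- The splitting of `Fin n` into a finset and its complement, enumerated in order. -/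
noncomputable def splitEquiv (X : Finset (Fin n)) {k l : ℕ} (hk : X.card = k)
    (hl : Xᶜ.card = l) : Fin k ⊕ Fin l ≃ Fin n :=
  Equiv.ofBijective
    (Sum.elim (fun i => X.orderEmbOfFin hk i) (fun i => Xᶜ.orderEmbOfFin hl i)) <| by
  refine (Fintype.bijective_iff_injective_and_card _).2 ⟨?_, by
    have := Finset.card_add_card_compl X
    simp only [Fintype.card_sum, Fintype.card_fin, ← hk, ← hl]
    simpa using this⟩
  rintro (a | a) (b | b) hab
  · simp only [Sum.elim_inl] at hab
    exact congrArg Sum.inl ((X.orderEmbOfFin hk).injective hab)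
  · exfalso
    have h1 := X.orderEmbOfFin_mem hk a
    have h2 := Xᶜ.orderEmbOfFin_mem hl b
    rw [Sum.elim_inl, Sum.elim_inr] at hab
    rw [hab] at h1
    exact (Finset.mem_compl.1 h2) h1
  · exfalso
    have h1 := X.orderEmbOfFin_mem hk b
    have h2 := Xᶜ.orderEmbOfFin_mem hl a
    rw [Sum.elim_inl, Sum.elim_inr] at hab
    rw [hab] at h2
    exact (Finset.mem_compl.1 h2) h1
  · simp only [Sum.elim_inr] at hab
    exact congrArg Sum.inr ((Xᶜ.orderEmbOfFin hl).injective hab)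

@[simp] lemma splitEquiv_inl (X : Finset (Fin n)) {k l : ℕ} (hk : X.card = k)
    (hl : Xᶜ.card = l) (i : Fin k) : splitEquiv X hk hl (Sum.inl i) = X.orderEmbOfFin hk i := rfl

@[simp] lemma splitEquiv_inr (X : Finset (Fin n)) {k l : ℕ} (hk : X.card = k)
    (hl : Xᶜ.card = l) (i : Fin l) : splitEquiv X hk hl (Sum.inr i) = Xᶜ.orderEmbOfFin hl i := rfl




lemma orderEmbOfFin_congr {α : Type*} [LinearOrder α] {s t : Finset α} (hst : s = t) {k : ℕ}
    (hs : s.card = k) (i : Fin k) :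
    s.orderEmbOfFin hs i = t.orderEmbOfFin (hst ▸ hs) i := by subst hst; rfl

lemma card_insert_erase {X : Finset (Fin n)} {x y : Fin n} (hx : x ∈ X) (hy : y ∉ X) :
    (insert y (X.erase x)).card = X.card := by
  rw [Finset.card_insert_of_notMem (fun hmem => hy (Finset.mem_of_mem_erase hmem)),
    Finset.card_erase_of_mem hx]
  have : 0 < X.card := Finset.card_pos.2 ⟨x, hx⟩
  omega

lemma compl_insert_erase {X : Finset (Fin n)} {x y : Fin n} (hx : x ∈ X) (hy : y ∉ X) :
    (insert y (X.erase x))ᶜ = insert x (Xᶜ.erase y) := by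
  have hne : x ≠ y := fun hxy => hy (hxy ▸ hx)
  ext s
  simp only [Finset.mem_compl, Finset.mem_insert, Finset.mem_erase]
  by_cases h1 : s = x <;> by_cases h2 : s = y <;> simp_all

lemma sum_insert_erase {X : Finset (Fin n)} {x y : Fin n} (hx : x ∈ X) (hy : y ∉ X) :
    (∑ r ∈ insert y (X.erase x), (r : ℕ)) + (x : ℕ) = (∑ r ∈ X, (r : ℕ)) + (y : ℕ) := by
  rw [Finset.sum_insert (fun hmem => hy (Finset.mem_of_mem_erase hmem)),
    ← Finset.sum_erase_add X _ hx]
  omega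

/-- Replacing `x ∈ X` by an "order-adjacent" `y ∉ X` changes the enumeration by a swap. -/
lemma orderEmbOfFin_insert_erase {X : Finset (Fin n)} {k : ℕ} (hk : X.card = k)
    {x y : Fin n} (hx : x ∈ X) (hy : y ∉ X)
    (hadj : ∀ s : Fin n, s ≠ x → s ≠ y → (s < x ↔ s < y))
    (hk' : (insert y (X.erase x)).card = k) (j : Fin k) :
    (insert y (X.erase x)).orderEmbOfFin hk' j = Equiv.swap x y (X.orderEmbOfFin hk j) := by
  have hne : x ≠ y := fun hxy => hy (hxy ▸ hx)
  have h := Finset.orderEmbOfFin_unique hk'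
    (f := fun j => Equiv.swap x y (X.orderEmbOfFin hk j)) ?_ ?_
  · exact (congrFun h j).symm
  · intro i
    have hmem := X.orderEmbOfFin_mem hk i
    by_cases hix : X.orderEmbOfFin hk i = x
    · rw [hix, Equiv.swap_apply_left]
      exact Finset.mem_insert_self _ _
    · have hiy : X.orderEmbOfFin hk i ≠ y := fun hh => hy (hh ▸ hmem)
      rw [Equiv.swap_apply_of_ne_of_ne hix hiy]
      exact Finset.mem_insert_of_mem (Finset.mem_erase.2 ⟨hix, hmem⟩)
  · intro i j hij
    dsimp only
    have hab : X.orderEmbOfFin hk i < X.orderEmbOfFin hk j :=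
      (X.orderEmbOfFin hk).strictMono hij
    set a := X.orderEmbOfFin hk i with ha
    set b := X.orderEmbOfFin hk j with hb
    have hamem : a ∈ X := X.orderEmbOfFin_mem hk i
    have hbmem : b ∈ X := X.orderEmbOfFin_mem hk j
    have hay : a ≠ y := fun hh => hy (hh ▸ hamem)
    have hby : b ≠ y := fun hh => hy (hh ▸ hbmem)
    by_cases hax : a = x
    · have hbx : b ≠ x := fun hh => absurd (hh ▸ hab) (by simp [hax])
      rw [hax, Equiv.swap_apply_left, Equiv.swap_apply_of_ne_of_ne hbx hby]
      have := hadj b hbx hby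
      have hnb : ¬ b < x := not_lt.2 (le_of_lt (hax ▸ hab))
      have : ¬ b < y := fun hh => hnb (this.2 hh)
      exact lt_of_le_of_ne (not_lt.1 this) hby.symm
    · by_cases hbx : b = x
      · rw [hbx, Equiv.swap_apply_left, Equiv.swap_apply_of_ne_of_ne hax hay]
        exact (hadj a hax hay).1 (hbx ▸ hab)
      · rw [Equiv.swap_apply_of_ne_of_ne hax hay, Equiv.swap_apply_of_ne_of_ne hbx hby]
        exact hab




/-- `X` is closed under predecessor. -/
def PredClosed (X : Finset (Fin n)) : Prop :=
  ∀ x ∈ X, ∀ y : Fin n, (y : ℕ) + 1 = (x : ℕ) → y ∈ X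

lemma predClosed_lower {X : Finset (Fin n)} (hX : PredClosed X) :
    ∀ x ∈ X, ∀ y : Fin n, y ≤ x → y ∈ X := by
  intro x hx y hyx
  obtain ⟨d, hd⟩ : ∃ d, (y : ℕ) + d = (x : ℕ) := ⟨x - y, by omega⟩
  induction d generalizing x with
  | zero => have : y = x := Fin.ext (by omega); exact this ▸ hx
  | succ d ih =>
    have hz : (y : ℕ) + d < n := by have := x.isLt; omega
    have hzx : ((⟨(y : ℕ) + d, hz⟩ : Fin n) : ℕ) + 1 = (x : ℕ) := by simp; omega
    have hzmem : (⟨(y : ℕ) + d, hz⟩ : Fin n) ∈ X := hX x hx _ hzx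
    exact ih _ hzmem (by simp [Fin.le_iff_val_le_val]) (by simp)

lemma predClosed_eq {X Y : Finset (Fin n)} (hX : PredClosed X) (hY : PredClosed Y)
    (hcard : X.card = Y.card) : X = Y := by
  have hsub : X ⊆ Y ∨ Y ⊆ X := by
    by_contra hc
    push_neg at hc
    obtain ⟨hc1, hc2⟩ := hc
    obtain ⟨a, haX, haY⟩ := Finset.not_subset.1 hc1
    obtain ⟨b, hbY, hbX⟩ := Finset.not_subset.1 hc2
    rcases le_total a b with hab | hab
    · exact haY (predClosed_lower hY b hbY a hab)
    · exact hbX (predClosed_lower hX a haX b hab)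
  rcases hsub with hs | hs
  · exact Finset.eq_of_subset_of_card_le hs (le_of_eq hcard.symm)
  · exact (Finset.eq_of_subset_of_card_le hs (le_of_eq hcard)).symm

lemma exists_move {X : Finset (Fin n)} (hX : ¬ PredClosed X) :
    ∃ x ∈ X, ∃ y : Fin n, y ∉ X ∧ (y : ℕ) + 1 = (x : ℕ) := by
  unfold PredClosed at hX
  push_neg at hX
  obtain ⟨x, hx, y, hy1, hy2⟩ := hX
  exact ⟨x, hx, y, hy2, hy1⟩

lemma sum_pos_of_move {X : Finset (Fin n)} {x : Fin n} (hx : x ∈ X) (hpos : 0 < (x : ℕ)) :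
    0 < ∑ r ∈ X, (r : ℕ) :=
  lt_of_lt_of_le hpos (Finset.single_le_sum (fun _ _ => Nat.zero_le _) hx)



/-- adjacency condition holds when `(x:ℕ) = (y:ℕ)+1` (in either orientation of the swap). -/
lemma adj_of_succ {x y : Fin n} (hxy : (y : ℕ) + 1 = (x : ℕ)) :
    ∀ s : Fin n, s ≠ x → s ≠ y → (s < x ↔ s < y) := by
  intro s hsx hsy
  have h1 : (s : ℕ) ≠ x := fun hh => hsx (Fin.ext hh)
  have h2 : (s : ℕ) ≠ y := fun hh => hsy (Fin.ext hh)
  constructor <;> intro hlt <;> [skip; skip] <;>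
    · rw [Fin.lt_iff_val_lt_val] at *
      omega

lemma splitEquiv_insert_erase (X : Finset (Fin n)) {k l : ℕ} (hk : X.card = k) (hl : Xᶜ.card = l)
    {x y : Fin n} (hx : x ∈ X) (hy : y ∉ X)
    (hadj : ∀ s : Fin n, s ≠ x → s ≠ y → (s < x ↔ s < y))
    (hk' : (insert y (X.erase x)).card = k) (hl' : (insert y (X.erase x))ᶜ.card = l) :
    splitEquiv (insert y (X.erase x)) hk' hl' = (splitEquiv X hk hl).trans (Equiv.swap x y) := by
  have hcompl : (insert y (X.erase x))ᶜ = insert x (Xᶜ.erase y) := compl_insert_erase hx hy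
  ext a
  rcases a with i | i
  · simp only [Equiv.trans_apply, splitEquiv_inl]
    exact congrArg Fin.val (orderEmbOfFin_insert_erase hk hx hy hadj hk' i)
  · simp only [Equiv.trans_apply, splitEquiv_inr]
    rw [orderEmbOfFin_congr hcompl hl' i]
    have hyX : y ∈ Xᶜ := Finset.mem_compl.2 hy
    have hxX : x ∉ Xᶜ := fun hh => (Finset.mem_compl.1 hh) hx
    have := orderEmbOfFin_insert_erase (X := Xᶜ) hl hyX hxX
      (fun s hsy hsx => (hadj s hsx hsy).symm) (hcompl ▸ hl') i
    rw [this, Equiv.swap_comm]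


variable {k l : ℕ}
lemma sign_splitEquiv_aux {k l : ℕ} :
    ∀ N : ℕ, ∀ X Y : Finset (Fin n), ∀ (hXk : X.card = k) (hXl : Xᶜ.card = l)
      (hYk : Y.card = k) (hYl : Yᶜ.card = l),
      (∑ r ∈ X, (r : ℕ)) + (∑ c ∈ Y, (c : ℕ)) ≤ N →
      Equiv.Perm.sign ((splitEquiv X hXk hXl).symm.trans (splitEquiv Y hYk hYl)) =
        (-1) ^ ((∑ r ∈ X, (r : ℕ)) + (∑ c ∈ Y, (c : ℕ))) := by
  intro N
  induction N with
  | zero =>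
    intro X Y hXk hXl hYk hYl hN
    have hX0 : ∑ r ∈ X, (r : ℕ) = 0 := by omega
    have hY0 : ∑ c ∈ Y, (c : ℕ) = 0 := by omega
    have hXpc : PredClosed X := by
      intro x hx y hxy
      have := Finset.sum_eq_zero_iff.1 hX0 x hx
      omega
    have hYpc : PredClosed Y := by
      intro x hx y hxy
      have := Finset.sum_eq_zero_iff.1 hY0 x hx
      omega
    have hXY : X = Y := predClosed_eq hXpc hYpc (hXk.trans hYk.symm)
    subst hXY
    have : splitEquiv X hYk hYl = splitEquiv X hXk hXl := rfl
    rw [this, Equiv.symm_trans_self, hX0]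
    simp
  | succ N ih =>
    intro X Y hXk hXl hYk hYl hN
    by_cases hYpc : PredClosed Y
    · by_cases hXpc : PredClosed X
      · have hXY : X = Y := predClosed_eq hXpc hYpc (hXk.trans hYk.symm)
        subst hXY
        have : splitEquiv X hYk hYl = splitEquiv X hXk hXl := rfl
        rw [this, Equiv.symm_trans_self]
        rw [Equiv.Perm.sign_refl]
        rw [Even.neg_one_pow ⟨∑ r ∈ X, (r : ℕ), by omega⟩]
      · -- move in X
        obtain ⟨x, hx, y, hy, hxy⟩ := exists_move hXpc
        set X' := insert y (X.erase x) with hX'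
        have hk' : X'.card = k := (card_insert_erase hx hy).trans hXk
        have hl' : X'ᶜ.card = l := by
          rw [hX', compl_insert_erase hx hy]
          have : x ∉ Xᶜ := fun hh => (Finset.mem_compl.1 hh) hx
          have : (insert x (Xᶜ.erase y)).card = Xᶜ.card :=
            card_insert_erase (Finset.mem_compl.2 hy) this
          rw [this, hXl]
        have hsum : (∑ r ∈ X', (r : ℕ)) + (x : ℕ) = (∑ r ∈ X, (r : ℕ)) + (y : ℕ) :=
          sum_insert_erase hx hy
        have hmove : splitEquiv X' hk' hl' = (splitEquiv X hXk hXl).trans (Equiv.swap x y) :=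
          splitEquiv_insert_erase X hXk hXl hx hy (adj_of_succ hxy) hk' hl'
        have hXeq : splitEquiv X hXk hXl = (splitEquiv X' hk' hl').trans (Equiv.swap x y) := by
          rw [hmove]
          ext a
          simp
        rw [hXeq]
        have hre : ((splitEquiv X' hk' hl').trans (Equiv.swap x y)).symm.trans
            (splitEquiv Y hYk hYl) =
            (Equiv.swap x y).trans ((splitEquiv X' hk' hl').symm.trans (splitEquiv Y hYk hYl)) := by
          ext a
          simp [Equiv.symm_apply_eq]
        rw [hre, Equiv.Perm.sign_trans]
        have hxney : x ≠ y := by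
          intro hh
          rw [hh] at hxy
          omega
        rw [ih X' Y hk' hl' hYk hYl (by omega), Equiv.Perm.sign_swap hxney]
        have hE : (∑ r ∈ X, (r : ℕ)) + (∑ c ∈ Y, (c : ℕ)) =
            ((∑ r ∈ X', (r : ℕ)) + (∑ c ∈ Y, (c : ℕ))) + 1 := by omega
        rw [hE, pow_succ]
    · -- move in Y
      obtain ⟨x, hx, y, hy, hxy⟩ := exists_move hYpc
      set Y' := insert y (Y.erase x) with hY'
      have hk' : Y'.card = k := (card_insert_erase hx hy).trans hYk
      have hl' : Y'ᶜ.card = l := by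
        rw [hY', compl_insert_erase hx hy]
        have hxc : x ∉ Yᶜ := fun hh => (Finset.mem_compl.1 hh) hx
        have : (insert x (Yᶜ.erase y)).card = Yᶜ.card :=
          card_insert_erase (Finset.mem_compl.2 hy) hxc
        rw [this, hYl]
      have hsum : (∑ r ∈ Y', (r : ℕ)) + (x : ℕ) = (∑ r ∈ Y, (r : ℕ)) + (y : ℕ) :=
        sum_insert_erase hx hy
      have hmove : splitEquiv Y' hk' hl' = (splitEquiv Y hYk hYl).trans (Equiv.swap x y) :=
        splitEquiv_insert_erase Y hYk hYl hx hy (adj_of_succ hxy) hk' hl'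
      have hYeq : splitEquiv Y hYk hYl = (splitEquiv Y' hk' hl').trans (Equiv.swap x y) := by
        rw [hmove]
        ext a
        simp
      rw [hYeq]
      have hre : (splitEquiv X hXk hXl).symm.trans
          ((splitEquiv Y' hk' hl').trans (Equiv.swap x y)) =
          ((splitEquiv X hXk hXl).symm.trans (splitEquiv Y' hk' hl')).trans (Equiv.swap x y) := by
        ext a
        simp
      rw [hre, Equiv.Perm.sign_trans]
      have hxney : x ≠ y := by
        intro hh
        rw [hh] at hxy
        omega
      rw [ih X Y' hXk hXl hk' hl' (by omega), Equiv.Perm.sign_swap hxney]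
      have hE : (∑ r ∈ X, (r : ℕ)) + (∑ c ∈ Y, (c : ℕ)) =
          ((∑ r ∈ X, (r : ℕ)) + (∑ c ∈ Y', (c : ℕ))) + 1 := by omega
      rw [hE, pow_succ]
      exact mul_comm _ _



/-- Block version of Jacobi's identity. -/
lemma det_toBlocks_inv_mul_det {R : Type*} [CommRing R] {p q : Type*}
    [Fintype p] [Fintype q] [DecidableEq p] [DecidableEq q]
    (B : Matrix (p ⊕ q) (p ⊕ q) R) (hB : IsUnit B.det) :
    (B⁻¹.toBlocks₁₁).det * B.det = (B.toBlocks₂₂).det := by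
  have hCB : B⁻¹ * B = 1 := Matrix.nonsing_inv_mul B hB
  set C := B⁻¹ with hC
  have hBblocks : B = Matrix.fromBlocks (B.toBlocks₁₁) (B.toBlocks₁₂) (B.toBlocks₂₁) (B.toBlocks₂₂) :=
    (Matrix.fromBlocks_toBlocks B).symm
  have hCblocks : C = Matrix.fromBlocks (C.toBlocks₁₁) (C.toBlocks₁₂) (C.toBlocks₂₁) (C.toBlocks₂₂) :=
    (Matrix.fromBlocks_toBlocks C).symm
  have hmul : Matrix.fromBlocks (C.toBlocks₁₁) (C.toBlocks₁₂) (C.toBlocks₂₁) (C.toBlocks₂₂) *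
      Matrix.fromBlocks (B.toBlocks₁₁) (B.toBlocks₁₂) (B.toBlocks₂₁) (B.toBlocks₂₂) =
      (1 : Matrix (p ⊕ q) (p ⊕ q) R) := by
    rw [← hBblocks, ← hCblocks]; exact hCB
  rw [Matrix.fromBlocks_multiply, ← Matrix.fromBlocks_one] at hmul
  have h11 : C.toBlocks₁₁ * B.toBlocks₁₁ + C.toBlocks₁₂ * B.toBlocks₂₁ = 1 :=
    congrArg Matrix.toBlocks₁₁ hmul
  have h12 : C.toBlocks₁₁ * B.toBlocks₁₂ + C.toBlocks₁₂ * B.toBlocks₂₂ = 0 :=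
    congrArg Matrix.toBlocks₁₂ hmul
  have key : Matrix.fromBlocks (C.toBlocks₁₁) (C.toBlocks₁₂) 0 1 * B =
      Matrix.fromBlocks 1 0 (B.toBlocks₂₁) (B.toBlocks₂₂) := by
    rw [hBblocks, Matrix.fromBlocks_multiply, h11, h12]
    simp
  have hdet := congrArg Matrix.det key
  rw [Matrix.det_mul, Matrix.det_fromBlocks_zero₂₁, Matrix.det_fromBlocks_zero₁₂] at hdet
  simpa using hdet


end JacobiAux

/-- **Jacobi's identity for complementary minors.** For an invertible `n × n` matrix `A`
over a commutative ring and subsets `I, J` of the index set of the same cardinality,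
`det((A⁻¹)[I,J]) * det A = (-1)^(Σ_{r∈I} r + Σ_{c∈J} c) * det(A[Jᶜ, Iᶜ])`. -/
theorem jacobi_identity_complementary_minors
    {R : Type*} [CommRing R] {n : ℕ}
    (A : Matrix (Fin n) (Fin n) R) (hA : IsUnit A.det)
    (I J : Finset (Fin n)) (h : I.card = J.card) :
    (A⁻¹.submatrix (fun i : Fin I.card => (I.orderIsoOfFin rfl i).1)
        (fun j : Fin I.card => (J.orderIsoOfFin h.symm j).1)).det * A.det =
      (-1 : R) ^ (∑ r ∈ I, (r : ℕ) + ∑ c ∈ J, (c : ℕ)) *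
        (A.submatrix (fun i : Fin Jᶜ.card => (Jᶜ.orderIsoOfFin rfl i).1)
          (fun j : Fin Jᶜ.card =>
            (Iᶜ.orderIsoOfFin (by simp [Finset.card_compl, h]) j).1)).det := by
  classical
  have hIl : Iᶜ.card = Jᶜ.card := by simp [Finset.card_compl, h]
  let eI : Fin I.card ⊕ Fin Jᶜ.card ≃ Fin n := splitEquiv I rfl hIl
  let eJ : Fin I.card ⊕ Fin Jᶜ.card ≃ Fin n := splitEquiv J h.symm rfl
  let B : Matrix (Fin I.card ⊕ Fin Jᶜ.card) (Fin I.card ⊕ Fin Jᶜ.card) R := A.submatrix eJ eI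
  -- determinant of B
  have hBrw : B = (A.submatrix eI eI).submatrix (eJ.trans eI.symm) id := by
    ext i j
    simp [B, Matrix.submatrix_apply]
  have hBdet : B.det = (Equiv.Perm.sign (eJ.trans eI.symm) : ℤ) * A.det := by
    rw [hBrw, Matrix.det_permute, Matrix.det_submatrix_equiv_self]
  -- the sign
  have hsign : Equiv.Perm.sign (eJ.trans eI.symm) =
      (-1) ^ (∑ r ∈ I, (r : ℕ) + ∑ c ∈ J, (c : ℕ)) := by
    have hconj : (eJ.trans eI.symm : Equiv.Perm (Fin I.card ⊕ Fin Jᶜ.card)) =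
        (eI.trans (eI.symm.trans eJ)).trans eI.symm := by
      ext a
      simp
    rw [hconj, Equiv.Perm.sign_trans_trans_symm]
    exact sign_splitEquiv_aux _ I J rfl hIl h.symm rfl le_rfl
  have hsignR : ((Equiv.Perm.sign (eJ.trans eI.symm) : ℤ) : R) =
      (-1 : R) ^ (∑ r ∈ I, (r : ℕ) + ∑ c ∈ J, (c : ℕ)) := by
    rw [hsign]
    push_cast
    ring
  -- B is invertible
  have hBunit : IsUnit B.det := by
    rw [hBdet]
    refine IsUnit.mul ?_ hA
    rcases Int.units_eq_one_or (Equiv.Perm.sign (eJ.trans eI.symm)) with hs | hs <;>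
      rw [hs] <;> simp
  -- inverse of B
  have hBinv : B⁻¹ = A⁻¹.submatrix eI eJ := by
    refine Matrix.inv_eq_left_inv ?_
    show A⁻¹.submatrix eI eJ * A.submatrix eJ eI = 1
    rw [Matrix.submatrix_mul_equiv, Matrix.nonsing_inv_mul A hA, Matrix.submatrix_one_equiv]
  -- block identity
  have hblock := det_toBlocks_inv_mul_det B hBunit
  rw [hBinv] at hblock
  -- identify the blocks with the statement's matrices
  have hLHS : (A⁻¹.submatrix eI eJ).toBlocks₁₁ =
      A⁻¹.submatrix (fun i : Fin I.card => (I.orderIsoOfFin rfl i).1)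
        (fun j : Fin I.card => (J.orderIsoOfFin h.symm j).1) := by
    ext i j
    simp [Matrix.toBlocks₁₁, eI, eJ, Finset.coe_orderIsoOfFin_apply]
  have hRHS : B.toBlocks₂₂ =
      A.submatrix (fun i : Fin Jᶜ.card => (Jᶜ.orderIsoOfFin rfl i).1)
        (fun j : Fin Jᶜ.card =>
          (Iᶜ.orderIsoOfFin (by simp [Finset.card_compl, h]) j).1) := by
    ext i j
    simp [Matrix.toBlocks₂₂, B, eI, eJ, Finset.coe_orderIsoOfFin_apply]
  rw [hLHS, hBdet, hsignR, hRHS] at hblock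
  -- final algebra
  set E := ∑ r ∈ I, (r : ℕ) + ∑ c ∈ J, (c : ℕ) with hE
  have hsq : (-1 : R) ^ E * (-1 : R) ^ E = 1 := by
    rw [← pow_add]
    exact Even.neg_one_pow ⟨E, rfl⟩
  calc (A⁻¹.submatrix (fun i : Fin I.card => (I.orderIsoOfFin rfl i).1)
        (fun j : Fin I.card => (J.orderIsoOfFin h.symm j).1)).det * A.det
      = (-1 : R) ^ E * ((A⁻¹.submatrix (fun i : Fin I.card => (I.orderIsoOfFin rfl i).1)
        (fun j : Fin I.card => (J.orderIsoOfFin h.symm j).1)).det *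
          ((-1 : R) ^ E * A.det)) := by
        rw [← mul_assoc, mul_comm ((-1 : R) ^ E), mul_assoc, ← mul_assoc ((-1 : R) ^ E), hsq,
          one_mul]
    _ = (-1 : R) ^ E * _ := by rw [hblock]
end

section
/- Let K be a field with a discrete valuation v, and let μ₁ ≥ μ₂ ≥ … ≥ μ_n be integers. Suppose A ∈ GL_n(K) satisfies: (i) for each 1 ≤ i ≤ n, every i×i minor of A has valuation ≥ μ_{n−i+1} + … + μ_n, and (ii) v(det A) = μ₁ + … + μ_n. Then for each 1 ≤ i ≤ n, every i×i minor of A⁻¹ has valuation ≥ −(μ₁ + … + μ_i). -/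
open Matrix

/-- Jacobi's identity, block form. -/
lemma jacobi_block {K : Type*} [Field K] {α β : Type*} [Fintype α] [Fintype β]
    [DecidableEq α] [DecidableEq β] (M : Matrix (α ⊕ β) (α ⊕ β) K) (hM : IsUnit M.det) :
    M.det * (M⁻¹.toBlocks₁₁).det = (M.toBlocks₂₂).det := by
  set B := M⁻¹ with hB
  have hMB : M * B = 1 := mul_nonsing_inv M hM
  have hMB' : fromBlocks M.toBlocks₁₁ M.toBlocks₁₂ M.toBlocks₂₁ M.toBlocks₂₂ *
      fromBlocks B.toBlocks₁₁ B.toBlocks₁₂ B.toBlocks₂₁ B.toBlocks₂₂ =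
      fromBlocks 1 0 0 1 := by
    rw [fromBlocks_toBlocks, fromBlocks_toBlocks, fromBlocks_one]; exact hMB
  rw [fromBlocks_multiply] at hMB'
  have e11 : M.toBlocks₁₁ * B.toBlocks₁₁ + M.toBlocks₁₂ * B.toBlocks₂₁ = 1 := by
    have := congrArg Matrix.toBlocks₁₁ hMB'
    rwa [Matrix.toBlocks_fromBlocks₁₁, Matrix.toBlocks_fromBlocks₁₁] at this
  have e21 : M.toBlocks₂₁ * B.toBlocks₁₁ + M.toBlocks₂₂ * B.toBlocks₂₁ = 0 := by
    have := congrArg Matrix.toBlocks₂₁ hMB'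
    rwa [Matrix.toBlocks_fromBlocks₂₁, Matrix.toBlocks_fromBlocks₂₁] at this
  have key : M * fromBlocks B.toBlocks₁₁ 0 B.toBlocks₂₁ 1 =
      fromBlocks 1 M.toBlocks₁₂ 0 M.toBlocks₂₂ := by
    nth_rewrite 1 [← fromBlocks_toBlocks M]
    rw [fromBlocks_multiply, e11, e21]
    simp
  have hdet := congrArg Matrix.det key
  rw [det_mul, det_fromBlocks_zero₁₂, det_fromBlocks_zero₂₁, det_one, det_one, mul_one,
    one_mul] at hdet
  exact hdet

lemma exists_extend {n i : ℕ} (hin : i ≤ n) {f : Fin i → Fin n} (hf : Function.Injective f) :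
    ∃ e : Fin i ⊕ Fin (n - i) ≃ Fin n, ∀ x, e (Sum.inl x) = f x := by
  classical
  have hcard : Fintype.card ((Set.range f)ᶜ : Set (Fin n)) = n - i := by
    rw [Fintype.card_compl_set]
    simp [Set.card_range_of_injective hf]
  refine ⟨(Equiv.sumCongr (Equiv.ofInjective f hf)
    (Fintype.equivFinOfCardEq hcard).symm).trans (Equiv.Set.sumCompl (Set.range f)), ?_⟩
  intro x; simp

/-- Let `K` be a field with a (discrete, additive) valuation `v` and `μ₁ ≥ … ≥ μ_n` integers.
If every `i × i` minor of an invertible matrix `A` has valuation at least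
`μ_{n-i+1} + … + μ_n` and `v (det A) = μ₁ + … + μ_n`, then every `i × i` minor of `A⁻¹`
has valuation at least `-(μ₁ + … + μ_i)`. -/
theorem minors_of_inverse_bounded {K : Type*} [Field K]
    (v : AddValuation K (WithTop ℤ)) {n : ℕ}
    (μ : Fin n → ℤ) (hμ : Antitone μ)
    (A : Matrix (Fin n) (Fin n) K) (hA : IsUnit A.det)
    (h1 : ∀ i : ℕ, 1 ≤ i → i ≤ n → ∀ f g : Fin i → Fin n,
      ((∑ j ∈ Finset.univ.filter (fun j : Fin n => n - i ≤ (j : ℕ)), μ j : ℤ) : WithTop ℤ) ≤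
        v ((A.submatrix f g).det))
    (h2 : v A.det = ((∑ j, μ j : ℤ) : WithTop ℤ)) :
    ∀ i : ℕ, 1 ≤ i → i ≤ n → ∀ f g : Fin i → Fin n,
      (((-(∑ j ∈ Finset.univ.filter (fun j : Fin n => (j : ℕ) < i), μ j) : ℤ)) : WithTop ℤ) ≤
        v ((A⁻¹.submatrix f g).det) := by
  classical
  intro i hi1 hin f g
  -- degenerate cases: f or g not injective
  by_cases hf : Function.Injective f
  swap
  · obtain ⟨x, y, hxy, hne⟩ : ∃ x y, f x = f y ∧ x ≠ y := by
      simp only [Function.Injective, not_forall] at hf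
      obtain ⟨x, y, h, h'⟩ := hf; exact ⟨x, y, h, h'⟩
    have : (A⁻¹.submatrix f g).det = 0 := by
      apply Matrix.det_zero_of_row_eq hne
      funext j; simp [Matrix.submatrix_apply, hxy]
    rw [this, v.map_zero]; exact le_top
  by_cases hg : Function.Injective g
  swap
  · obtain ⟨x, y, hxy, hne⟩ : ∃ x y, g x = g y ∧ x ≠ y := by
      simp only [Function.Injective, not_forall] at hg
      obtain ⟨x, y, h, h'⟩ := hg; exact ⟨x, y, h, h'⟩
    have : (A⁻¹.submatrix f g).det = 0 := by
      apply Matrix.det_zero_of_column_eq hne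
      intro r; simp [Matrix.submatrix_apply, hxy]
    rw [this, v.map_zero]; exact le_top
  -- extend f and g to equivalences
  obtain ⟨e₂, he₂⟩ := exists_extend hin hf
  obtain ⟨e₁, he₁⟩ := exists_extend hin hg
  set A' : Matrix (Fin i ⊕ Fin (n - i)) (Fin i ⊕ Fin (n - i)) K := A.submatrix e₁ e₂ with hA'
  have hdetA' : v A'.det = v A.det := by
    have : A' = (A.submatrix e₂ e₂).submatrix (e₁.trans e₂.symm) (Equiv.refl _) := by
      ext r c; simp [hA', Matrix.submatrix_apply]
    rw [this]
    have := Matrix.det_permute (e₁.trans e₂.symm) (A.submatrix e₂ e₂)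
    rw [show ((Equiv.refl (Fin i ⊕ Fin (n-i)) : _ ≃ _) : _ → _) = id from rfl, this,
      Matrix.det_submatrix_equiv_self]
    rcases Int.units_eq_one_or (Equiv.Perm.sign (e₁.trans e₂.symm)) with h | h <;>
      rw [h] <;> simp [v.map_neg]
  have hA'unit : IsUnit A'.det := by
    have : A' = (A.submatrix e₂ e₂).submatrix (e₁.trans e₂.symm) (Equiv.refl _) := by
      ext r c; simp [hA', Matrix.submatrix_apply]
    rw [this]
    rw [show ((Equiv.refl (Fin i ⊕ Fin (n-i)) : _ ≃ _) : _ → _) = id from rfl,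
      Matrix.det_permute (e₁.trans e₂.symm) (A.submatrix e₂ e₂),
      Matrix.det_submatrix_equiv_self]
    exact ((Equiv.Perm.sign (e₁.trans e₂.symm)).isUnit.map (Int.castRingHom K)).mul hA
  have hinv : A'⁻¹ = A⁻¹.submatrix e₂ e₁ := Matrix.inv_submatrix_equiv A e₁ e₂
  have hblock : A'⁻¹.toBlocks₁₁ = A⁻¹.submatrix f g := by
    rw [hinv]; ext r c
    simp [Matrix.toBlocks₁₁, Matrix.submatrix_apply, he₁, he₂]
  have hblock22 : A'.toBlocks₂₂ = A.submatrix (e₁ ∘ Sum.inr) (e₂ ∘ Sum.inr) := by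
    ext r c; simp [Matrix.toBlocks₂₂, hA', Matrix.submatrix_apply]
  -- bound on complementary minors
  have hcomp : ∀ f' g' : Fin (n - i) → Fin n,
      ((∑ j ∈ Finset.univ.filter (fun j : Fin n => i ≤ (j : ℕ)), μ j : ℤ) : WithTop ℤ) ≤
        v ((A.submatrix f' g').det) := by
    intro f' g'
    rcases Nat.eq_or_lt_of_le hin with h | h
    · haveI : IsEmpty (Fin (n - i)) := ⟨fun x => absurd x.2 (by omega)⟩
      rw [Matrix.det_isEmpty, v.map_one]
      have hfe : Finset.univ.filter (fun j : Fin n => i ≤ (j : ℕ)) = ∅ := by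
        ext j
        simp only [Finset.mem_filter, Finset.mem_univ, true_and, Finset.notMem_empty,
          iff_false, not_le]
        omega
      simp [hfe]
    · have := h1 (n - i) (by omega) (by omega) f' g'
      rwa [Nat.sub_sub_self hin] at this
  -- Jacobi's identity
  have hjac := jacobi_block A' hA'unit
  have hv := congrArg v hjac
  rw [v.map_mul, hdetA', hblock, hblock22, h2] at hv
  have hge := hcomp (e₁ ∘ Sum.inr) (e₂ ∘ Sum.inr)
  rw [← hv] at hge
  -- final arithmetic
  have hsplit : (∑ j ∈ Finset.univ.filter (fun j : Fin n => (j : ℕ) < i), μ j) +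
      (∑ j ∈ Finset.univ.filter (fun j : Fin n => i ≤ (j : ℕ)), μ j) = ∑ j, μ j := by
    rw [← Finset.sum_filter_add_sum_filter_not Finset.univ (fun j : Fin n => (j : ℕ) < i) μ]
    congr 1
    apply Finset.sum_congr _ (fun _ _ => rfl)
    ext j; simp [not_lt]
  rcases eq_or_ne (v ((A⁻¹.submatrix f g).det)) ⊤ with ht | ht
  · rw [ht]; exact le_top
  · obtain ⟨x, hx⟩ := WithTop.ne_top_iff_exists.mp ht
    rw [← hx] at hge ⊢
    rw [← WithTop.coe_add, WithTop.coe_le_coe] at hge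
    rw [WithTop.coe_le_coe]
    omega
end

section
/- Let K = Frac(R) for a DVR R with uniformizer π and valuation v, and let A ∈ GL_n(K) have Smith normal form A = U·diag(π^{μ₁},…,π^{μ_n})·V with U,V ∈ GL_n(R) and μ₁ ≥ … ≥ μ_n. Let λ₁ ≥ … ≥ λ_n be integers. Then the following are equivalent: (a) for every 1 ≤ i ≤ n every i×i minor of A has valuation ≥ λ_{n−i+1} + … + λ_n, and v(det A) = λ₁ + … + λ_n; (b) μ ≼ λ in the dominance order, i.e. Σ_{j≤i} μ_j ≤ Σ_{j≤i} λ_j for all i with equality for i = n. -/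
/-!
Multiplying by a matrix with integral entries can only raise the minimal valuation of the
`i × i` minors (Cauchy–Binet), and the inverse of a matrix in `GL_n(R)` is again integral, so
the `i × i` minors of `A` and of `diag(π^{μ₁}, …, π^{μ_n})` have the same lower bounds. For
antitone `μ` the smallest valuation of an `i × i` minor of the diagonal matrix is the sum
`μ_{n-i+1} + ⋯ + μ_n` of the `i` smallest exponents. Hence (a) says that every tail sum of `λ`
is at most the corresponding tail sum of `μ`, with equal totals, which is the dominance `μ ≼ λ`.
-/

open Finset Matrix

namespace Finset

theorem sum_le_sum_of_card_eq_of_forall_sdiff {ι M : Type*} [DecidableEq ι] [AddCommMonoid M]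
    [LinearOrder M] [IsOrderedAddMonoid M] {s t : Finset ι} {f : ι → M} (hst : #s = #t)
    (h : ∀ x ∈ s \ t, ∀ y ∈ t \ s, f x ≤ f y) : ∑ x ∈ s, f x ≤ ∑ x ∈ t, f x := by
  rcases (t \ s).eq_empty_or_nonempty with hts | hts
  · have hst' : s \ t = ∅ := card_eq_zero.1 (by rw [card_sdiff_comm hst, hts, card_empty])
    rw [← sum_inter_add_sum_sdiff s t, ← sum_inter_add_sum_sdiff t s, hst', hts, inter_comm]
  set c := (t \ s).inf' hts f
  calc ∑ x ∈ s, f x = ∑ x ∈ s ∩ t, f x + ∑ x ∈ s \ t, f x := (sum_inter_add_sum_sdiff s t f).symm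
    _ ≤ ∑ x ∈ s ∩ t, f x + #(s \ t) • c := by
      gcongr
      exact sum_le_card_nsmul _ _ _ fun x hx => le_inf' hts _ fun y hy => h x hx y hy
    _ = ∑ x ∈ t ∩ s, f x + #(t \ s) • c := by rw [inter_comm, card_sdiff_comm hst]
    _ ≤ ∑ x ∈ t ∩ s, f x + ∑ x ∈ t \ s, f x := by
      gcongr
      exact card_nsmul_le_sum _ _ _ fun y hy => inf'_le f hy
    _ = ∑ x ∈ t, f x := sum_inter_add_sum_sdiff t s f

end Finset

section TailSums

variable {n : ℕ}

theorem card_filter_sub_le_val {i : ℕ} (hi : i ≤ n) :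
    #(univ.filter fun j : Fin n => n - i ≤ (j : ℕ)) = i := by
  have h := card_filter_add_card_filter_not (s := (univ : Finset (Fin n)))
    (fun j => (j : ℕ) < n - i)
  simp only [not_lt, Fin.card_filter_val_lt, card_univ, Fintype.card_fin] at h
  omega

theorem sum_filter_val_lt_add_sum_filter_le_val {M : Type*} [AddCommMonoid M] (x : Fin n → M)
    (k : ℕ) :
    ∑ j ∈ univ.filter (fun j : Fin n => (j : ℕ) < k), x j +
      ∑ j ∈ univ.filter (fun j : Fin n => k ≤ (j : ℕ)), x j = ∑ j, x j := by
  simpa only [not_lt] using sum_filter_add_sum_filter_not univ (fun j : Fin n => (j : ℕ) < k) x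

theorem sum_filter_sub_le_val_le_sum_comp {M : Type*} [AddCommMonoid M] [LinearOrder M]
    [IsOrderedAddMonoid M] {μ : Fin n → M} (hμ : Antitone μ) {i : ℕ} (hi : i ≤ n)
    {f : Fin i → Fin n} (hf : Function.Injective f) :
    ∑ j ∈ univ.filter (fun j : Fin n => n - i ≤ (j : ℕ)), μ j ≤ ∑ a, μ (f a) := by
  classical
  rw [← sum_image fun a _ b _ h => hf h]
  apply sum_le_sum_of_card_eq_of_forall_sdiff
  · rw [card_filter_sub_le_val hi, card_image_of_injective _ hf, card_univ, Fintype.card_fin]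
  · intro x hx y hy
    simp only [mem_sdiff, mem_filter, mem_univ, true_and, not_le] at hx hy
    exact hμ (Fin.le_def.2 (by omega))

theorem dominance_iff_tail_sums (μ lam : Fin n → ℤ) (htot : ∑ j, μ j = ∑ j, lam j) :
    (∀ i : ℕ, 1 ≤ i → i ≤ n →
        ∑ j ∈ univ.filter (fun j : Fin n => (j : ℕ) < i), μ j ≤
          ∑ j ∈ univ.filter (fun j : Fin n => (j : ℕ) < i), lam j) ↔
      ∀ i : ℕ, 1 ≤ i → i ≤ n →
        ∑ j ∈ univ.filter (fun j : Fin n => n - i ≤ (j : ℕ)), lam j ≤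
          ∑ j ∈ univ.filter (fun j : Fin n => n - i ≤ (j : ℕ)), μ j := by
  have hμ := sum_filter_val_lt_add_sum_filter_le_val μ
  have hlam := sum_filter_val_lt_add_sum_filter_le_val lam
  constructor
  · intro h i hi hin
    have hk : ∑ j ∈ univ.filter (fun j : Fin n => (j : ℕ) < n - i), μ j ≤
        ∑ j ∈ univ.filter (fun j : Fin n => (j : ℕ) < n - i), lam j := by
      rcases Nat.eq_zero_or_pos (n - i) with h0 | hpos
      · simp [h0]
      · exact h (n - i) hpos (Nat.sub_le n i)
    linarith [hμ (n - i), hlam (n - i)]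
  · intro h i hi hin
    rcases eq_or_lt_of_le hin with rfl | hlt
    · simpa [Fin.is_lt] using htot.le
    · have hk := h (n - i) (by omega) (Nat.sub_le n i)
      rw [Nat.sub_sub_self hin] at hk
      linarith [hμ i, hlam i]

end TailSums

theorem Matrix.det_mul_eq_sum_prod_mul_det_submatrix {R l m : Type*} [CommRing R] [Fintype l]
    [DecidableEq l] [Fintype m] (X : Matrix l m R) (Y : Matrix m l R) :
    (X * Y).det = ∑ κ : l → m, (∏ a, X a (κ a)) * (Y.submatrix κ id).det := by
  have hrows : X * Y = Matrix.of fun a => ∑ k, X a k • Y k := by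
    ext a b
    simp [Matrix.mul_apply, Finset.sum_apply]
  have hdet : (Matrix.of fun a => ∑ k, X a k • Y k).det =
      (detRowAlternating : (l → R) [⋀^l]→ₗ[R] R).toMultilinearMap fun a => ∑ k, X a k • Y k :=
    rfl
  rw [hrows, hdet, MultilinearMap.map_sum]
  refine sum_congr rfl fun κ _ => ?_
  rw [MultilinearMap.map_smul_univ]
  rfl

namespace AddValuation

variable {K Γ₀ : Type*}

theorem map_prod [CommRing K] [LinearOrderedAddCommMonoidWithTop Γ₀] (v : AddValuation K Γ₀)
    {ι : Type*} (s : Finset ι) (f : ι → K) : v (∏ a ∈ s, f a) = ∑ a ∈ s, v (f a) := by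
  classical
  induction s using Finset.induction_on with
  | empty => simp
  | insert a s ha ih => rw [prod_insert ha, sum_insert ha, v.map_mul, ih]

theorem map_algebraMap_eq_zero_of_isUnit {R : Type*} [CommRing R] [Ring K] [Algebra R K]
    [LinearOrderedAddCommMonoidWithTop Γ₀] (v : AddValuation K Γ₀)
    (hv0 : ∀ r : R, 0 ≤ v (algebraMap R K r)) {r : R} (hr : IsUnit r) :
    v (algebraMap R K r) = 0 := by
  obtain ⟨u, rfl⟩ := hr
  have h : v (algebraMap R K u) + v (algebraMap R K ↑u⁻¹) = 0 := by
    rw [← v.map_mul, ← _root_.map_mul, Units.mul_inv, _root_.map_one, v.map_one]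
  exact ((add_eq_zero_iff_of_nonneg (hv0 _) (hv0 _)).1 h).1

theorem map_zpow_of_eq_one [Field K] (v : AddValuation K (WithTop ℤ)) {ϖ : K} (hϖ : v ϖ = 1)
    (m : ℤ) : v (ϖ ^ m) = m := by
  obtain ⟨p, rfl | rfl⟩ := Int.eq_nat_or_neg m
  · rw [zpow_natCast, v.map_pow, hϖ, nsmul_one]
    rfl
  · rw [_root_.zpow_neg, zpow_natCast, v.map_inv, v.map_pow, hϖ, nsmul_one]
    rfl

end AddValuation

namespace Matrix

section Minors

variable {K Γ₀ : Type*} [CommRing K] [LinearOrderedAddCommMonoidWithTop Γ₀]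
  (v : AddValuation K Γ₀) {l m n : Type*} {i : ℕ} {c : Γ₀}

def MinorsValuationGE (i : ℕ) (c : Γ₀) (B : Matrix m n K) : Prop :=
  ∀ (f : Fin i → m) (g : Fin i → n), c ≤ v (B.submatrix f g).det

variable {v}

theorem MinorsValuationGE.mul_left [Fintype m] {W : Matrix l m K} (hW : ∀ a b, 0 ≤ v (W a b))
    {B : Matrix m n K} (hB : MinorsValuationGE v i c B) : MinorsValuationGE v i c (W * B) := by
  intro f g
  rw [submatrix_mul _ _ f id g Function.bijective_id, det_mul_eq_sum_prod_mul_det_submatrix]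
  refine v.map_le_sum fun κ _ => ?_
  rw [v.map_mul, v.map_prod, submatrix_submatrix]
  calc c ≤ v (B.submatrix κ g).det := hB κ g
    _ ≤ _ := le_add_of_nonneg_left (sum_nonneg fun a _ => hW _ _)

theorem minorsValuationGE_transpose_iff {B : Matrix m n K} :
    MinorsValuationGE v i c Bᵀ ↔ MinorsValuationGE v i c B := by
  refine ⟨fun h f g => ?_, fun h f g => ?_⟩
  · simpa [← transpose_submatrix, det_transpose] using h g f
  · simpa [← transpose_submatrix, det_transpose] using h g f

theorem MinorsValuationGE.mul_right [Fintype n] {B : Matrix m n K}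
    (hB : MinorsValuationGE v i c B) {W : Matrix n l K} (hW : ∀ a b, 0 ≤ v (W a b)) :
    MinorsValuationGE v i c (B * W) := by
  rw [← minorsValuationGE_transpose_iff, transpose_mul]
  exact (minorsValuationGE_transpose_iff.2 hB).mul_left fun a b => hW b a

end Minors

section IntegralConjugation

variable {R K Γ₀ : Type*} [CommRing R] [CommRing K] [Algebra R K]
  [LinearOrderedAddCommMonoidWithTop Γ₀] {v : AddValuation K Γ₀} {m n : Type*} [Fintype n]
  [DecidableEq n] {i : ℕ} {c : Γ₀}

theorem minorsValuationGE_map_mul_iff (hv0 : ∀ r : R, 0 ≤ v (algebraMap R K r))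
    {U : Matrix n n R} (hU : IsUnit U.det) {B : Matrix n m K} :
    MinorsValuationGE v i c (U.map (algebraMap R K) * B) ↔ MinorsValuationGE v i c B := by
  refine ⟨fun h => ?_, fun h => h.mul_left fun a b => hv0 _⟩
  have hB : B = U⁻¹.map (algebraMap R K) * (U.map (algebraMap R K) * B) := by
    rw [← Matrix.mul_assoc, ← Matrix.map_mul, nonsing_inv_mul U hU,
      Matrix.map_one _ (map_zero _) (map_one _), Matrix.one_mul]
  rw [hB]
  exact h.mul_left fun a b => hv0 _

theorem minorsValuationGE_mul_map_iff (hv0 : ∀ r : R, 0 ≤ v (algebraMap R K r))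
    {V : Matrix n n R} (hV : IsUnit V.det) {B : Matrix m n K} :
    MinorsValuationGE v i c (B * V.map (algebraMap R K)) ↔ MinorsValuationGE v i c B := by
  rw [← minorsValuationGE_transpose_iff, transpose_mul, ← transpose_map,
    minorsValuationGE_map_mul_iff hv0 (by rwa [det_transpose]), minorsValuationGE_transpose_iff]

theorem valuation_det_map_mul_mul_map (hv0 : ∀ r : R, 0 ≤ v (algebraMap R K r))
    {U V : Matrix n n R} (hU : IsUnit U.det) (hV : IsUnit V.det) (B : Matrix n n K) :
    v (U.map (algebraMap R K) * B * V.map (algebraMap R K)).det = v B.det := by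
  have hunit : ∀ W : Matrix n n R, IsUnit W.det → v (W.map (algebraMap R K)).det = 0 :=
    fun W hW => by
      rw [← RingHom.mapMatrix_apply, ← RingHom.map_det]
      exact v.map_algebraMap_eq_zero_of_isUnit hv0 hW
  rw [det_mul, det_mul, v.map_mul, v.map_mul, hunit U hU, hunit V hV, zero_add, add_zero]

end IntegralConjugation

theorem le_valuation_det_of_forall_perm {K Γ₀ ι : Type*} [CommRing K]
    [LinearOrderedAddCommMonoidWithTop Γ₀] {v : AddValuation K Γ₀} [Fintype ι] [DecidableEq ι]
    {M : Matrix ι ι K} {c : Γ₀} (h : ∀ σ : Equiv.Perm ι, c ≤ ∑ a, v (M (σ a) a)) :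
    c ≤ v M.det := by
  rw [det_apply']
  refine v.map_le_sum fun σ _ => ?_
  have hsign : v ((Equiv.Perm.sign σ : ℤ) : K) = 0 := by
    rcases Int.units_eq_one_or (Equiv.Perm.sign σ) with hσ | hσ <;> simp [hσ]
  rw [v.map_mul, hsign, zero_add, v.map_prod]
  exact h σ

section DiagonalZpow

variable {K : Type*} [Field K] {v : AddValuation K (WithTop ℤ)} {ϖ : K}

theorem valuation_det_diagonal_zpow (hϖ : v ϖ = 1) {ι : Type*} [Fintype ι] [DecidableEq ι]
    (μ : ι → ℤ) : v (diagonal fun j => ϖ ^ μ j).det = ((∑ j, μ j : ℤ) : WithTop ℤ) := by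
  simp only [det_diagonal, v.map_prod, v.map_zpow_of_eq_one hϖ]
  push_cast
  rfl

theorem minorsValuationGE_diagonal_zpow_iff (hϖ : v ϖ = 1) {n : ℕ} {μ : Fin n → ℤ}
    (hμ : Antitone μ) {i : ℕ} (hi : i ≤ n) {c : WithTop ℤ} :
    MinorsValuationGE v i c (diagonal fun j => ϖ ^ μ j) ↔
      c ≤ ((∑ j ∈ univ.filter (fun j : Fin n => n - i ≤ (j : ℕ)), μ j : ℤ) : WithTop ℤ) := by
  constructor
  · intro h
    let e :=
      (univ.filter fun j : Fin n => n - i ≤ (j : ℕ)).orderEmbOfFin (card_filter_sub_le_val hi)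
    have he := h e e
    rw [submatrix_diagonal _ _ e.injective, Function.comp_def, valuation_det_diagonal_zpow hϖ,
      ← sum_image fun a _ b _ hab => e.injective hab, image_orderEmbOfFin_univ] at he
    exact he
  · intro h f g
    by_cases hf : Function.Injective f
    · refine le_valuation_det_of_forall_perm fun σ => ?_
      calc c ≤ ((∑ a, μ (f (σ a)) : ℤ) : WithTop ℤ) :=
            h.trans (WithTop.coe_le_coe.2
              (sum_filter_sub_le_val_le_sum_comp hμ hi (hf.comp σ.injective)))
        _ = ∑ a, ((μ (f (σ a)) : ℤ) : WithTop ℤ) := by push_cast; rfl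
        _ ≤ _ := sum_le_sum fun a _ => ?_
      rw [submatrix_apply]
      by_cases hfg : f (σ a) = g a
      · rw [← hfg, diagonal_apply_eq, v.map_zpow_of_eq_one hϖ]
      · rw [diagonal_apply_ne _ hfg, v.map_zero]
        exact le_top
    · obtain ⟨a, b, hab, hne⟩ := Function.not_injective_iff.1 hf
      rw [det_zero_of_row_eq hne (funext fun c => by simp [hab]), v.map_zero]
      exact le_top

end DiagonalZpow

end Matrix

theorem bounded_iff_dominance_order_general
    {R : Type*} [CommRing R]
    (K : Type*) [Field K] [Algebra R K]
    (π : R)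
    (v : AddValuation K (WithTop ℤ))
    (hv0 : ∀ r : R, 0 ≤ v (algebraMap R K r))
    (hvπ : v (algebraMap R K π) = 1)
    {n : ℕ} (μ : Fin n → ℤ) (hμ : Antitone μ) (lam : Fin n → ℤ)
    (U V : Matrix (Fin n) (Fin n) R) (hU : IsUnit U.det) (hV : IsUnit V.det)
    (A : Matrix (Fin n) (Fin n) K)
    (hA : A = U.map ⇑(algebraMap R K) *
        Matrix.diagonal (fun i => (algebraMap R K π) ^ (μ i)) * V.map ⇑(algebraMap R K)) :
    ((∀ i : ℕ, 1 ≤ i → i ≤ n → ∀ f g : Fin i → Fin n,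
        ((∑ j ∈ Finset.univ.filter (fun j : Fin n => n - i ≤ (j : ℕ)), lam j : ℤ) : WithTop ℤ) ≤
          v ((A.submatrix f g).det)) ∧
      v A.det = ((∑ j, lam j : ℤ) : WithTop ℤ)) ↔
    ((∀ i : ℕ, 1 ≤ i → i ≤ n →
        ∑ j ∈ Finset.univ.filter (fun j : Fin n => (j : ℕ) < i), μ j ≤
          ∑ j ∈ Finset.univ.filter (fun j : Fin n => (j : ℕ) < i), lam j) ∧
      ∑ j, μ j = ∑ j, lam j) := by
  have hminors : ∀ i ≤ n, ∀ c, MinorsValuationGE v i c A ↔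
      c ≤ ((∑ j ∈ univ.filter (fun j : Fin n => n - i ≤ (j : ℕ)), μ j : ℤ) : WithTop ℤ) :=
    fun i hi c => by
      rw [hA, minorsValuationGE_mul_map_iff hv0 hV, minorsValuationGE_map_mul_iff hv0 hU,
        minorsValuationGE_diagonal_zpow_iff hvπ hμ hi]
  have hdet : v A.det = ((∑ j, μ j : ℤ) : WithTop ℤ) := by
    rw [hA, valuation_det_map_mul_mul_map hv0 hU hV, valuation_det_diagonal_zpow hvπ]
  have htails : (∀ i : ℕ, 1 ≤ i → i ≤ n → ∀ f g : Fin i → Fin n,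
      ((∑ j ∈ univ.filter (fun j : Fin n => n - i ≤ (j : ℕ)), lam j : ℤ) : WithTop ℤ) ≤
        v ((A.submatrix f g).det)) ↔ ∀ i : ℕ, 1 ≤ i → i ≤ n →
      ∑ j ∈ univ.filter (fun j : Fin n => n - i ≤ (j : ℕ)), lam j ≤
        ∑ j ∈ univ.filter (fun j : Fin n => n - i ≤ (j : ℕ)), μ j :=
    forall_congr' fun i => imp_congr_right fun _ => forall_congr' fun hi =>
      (hminors i hi _).trans WithTop.coe_le_coe
  rw [htails, hdet, WithTop.coe_inj]
  exact and_congr_left fun htot => (dominance_iff_tail_sums μ lam htot).symm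

/-- Let `R` be a DVR with uniformizer `π` and normalized valuation `v` on `K = Frac R`,
and let `A ∈ GL_n(K)` have Smith normal form `A = U · diag(π^{μ₁},…,π^{μ_n}) · V` with
`U, V ∈ GL_n(R)` and `μ₁ ≥ … ≥ μ_n`. For integers `λ₁ ≥ … ≥ λ_n` the following are
equivalent: (a) every `i × i` minor of `A` has valuation `≥ λ_{n-i+1} + … + λ_n` and
`v (det A) = λ₁ + … + λ_n`; (b) `μ ≼ λ` in the dominance order. -/
theorem bounded_iff_dominance_order
    {R : Type*} [CommRing R] [IsDomain R] [IsDiscreteValuationRing R]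
    (K : Type*) [Field K] [Algebra R K] [IsFractionRing R K]
    (π : R) (hπ : Irreducible π)
    (v : AddValuation K (WithTop ℤ))
    (hv0 : ∀ r : R, 0 ≤ v (algebraMap R K r))
    (hvπ : v (algebraMap R K π) = 1)
    {n : ℕ} (μ : Fin n → ℤ) (hμ : Antitone μ) (lam : Fin n → ℤ) (hlam : Antitone lam)
    (U V : Matrix (Fin n) (Fin n) R) (hU : IsUnit U.det) (hV : IsUnit V.det)
    (A : Matrix (Fin n) (Fin n) K)
    (hA : A = U.map ⇑(algebraMap R K) *
        Matrix.diagonal (fun i => (algebraMap R K π) ^ (μ i)) * V.map ⇑(algebraMap R K)) :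
    ((∀ i : ℕ, 1 ≤ i → i ≤ n → ∀ f g : Fin i → Fin n,
        ((∑ j ∈ Finset.univ.filter (fun j : Fin n => n - i ≤ (j : ℕ)), lam j : ℤ) : WithTop ℤ) ≤
          v ((A.submatrix f g).det)) ∧
      v A.det = ((∑ j, lam j : ℤ) : WithTop ℤ)) ↔
    ((∀ i : ℕ, 1 ≤ i → i ≤ n →
        ∑ j ∈ Finset.univ.filter (fun j : Fin n => (j : ℕ) < i), μ j ≤
          ∑ j ∈ Finset.univ.filter (fun j : Fin n => (j : ℕ) < i), lam j) ∧
      ∑ j, μ j = ∑ j, lam j) :=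
  bounded_iff_dominance_order_general K π v hv0 hvπ μ hμ lam U V hU hV A hA
end

section
/- Let R be a commutative ring and γ ∈ GL_n(R((z))) such that z^{d'}·γ has entries in R[[z]] and z^{d''}·γ⁻¹ has entries in R[[z]] for natural numbers d', d''. Then for every g ∈ GL_n(R[[z]]) with g ≡ 1 (mod z^{d'+d''}), the conjugate γ⁻¹·g·γ lies in GL_n(R[[z]]). -/
private lemma conj_aux {S : Type*} [CommRing S] {n : ℕ}
    (X Y G : Matrix (Fin n) (Fin n) S) (a b : S) (h : X * Y = 1) :
    X * (1 + (a * b) • G) * Y = 1 + (a • X) * G * (b • Y) := by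
  rw [mul_add, mul_one, add_mul, h]
  congr 1
  simp only [smul_mul_assoc, mul_smul_comm, smul_smul]
  rw [mul_comm b a]

/-- If `γ ∈ GL_n(R((z)))` is such that `z^{d'}·γ` and `z^{d''}·γ⁻¹` have entries in
`R[[z]]`, then for every `g ∈ GL_n(R[[z]])` with `g ≡ 1 (mod z^{d'+d''})` the conjugate
`γ⁻¹·g·γ` again lies in `GL_n(R[[z]])`. -/
theorem conjugate_by_bounded_is_integral {R : Type*} [CommRing R] {n : ℕ}
    (γ : Matrix (Fin n) (Fin n) (LaurentSeries R)) (hγ : IsUnit γ.det)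
    (d' d'' : ℕ)
    (h1 : ∀ i j, ∃ p : PowerSeries R,
      HahnSeries.single (d' : ℤ) (1 : R) * γ i j = HahnSeries.ofPowerSeries ℤ R p)
    (h2 : ∀ i j, ∃ p : PowerSeries R,
      HahnSeries.single (d'' : ℤ) (1 : R) * γ⁻¹ i j = HahnSeries.ofPowerSeries ℤ R p)
    (g : Matrix (Fin n) (Fin n) (PowerSeries R)) (hg : IsUnit g.det)
    (g' : Matrix (Fin n) (Fin n) (PowerSeries R))
    (hcong : g = 1 + (PowerSeries.X ^ (d' + d'') : PowerSeries R) • g') :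
    ∃ h : Matrix (Fin n) (Fin n) (PowerSeries R), IsUnit h.det ∧
      γ⁻¹ * g.map ⇑(HahnSeries.ofPowerSeries ℤ R) * γ =
        h.map ⇑(HahnSeries.ofPowerSeries ℤ R) := by
  set φ := HahnSeries.ofPowerSeries ℤ R with hφ
  choose Q hQ using h1
  choose P hP using h2
  set Qm : Matrix (Fin n) (Fin n) (PowerSeries R) := Matrix.of Q with hQm
  set Pm : Matrix (Fin n) (Fin n) (PowerSeries R) := Matrix.of P with hPm
  have hQmap : Qm.map φ = HahnSeries.single (d' : ℤ) (1 : R) • γ := by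
    apply Matrix.ext; intro i j
    simp only [Matrix.map_apply, Matrix.smul_apply, smul_eq_mul, hQm, Matrix.of_apply]
    exact (hQ i j).symm
  have hPmap : Pm.map φ = HahnSeries.single (d'' : ℤ) (1 : R) • γ⁻¹ := by
    apply Matrix.ext; intro i j
    simp only [Matrix.map_apply, Matrix.smul_apply, smul_eq_mul, hPm, Matrix.of_apply]
    exact (hP i j).symm
  have hinv : γ⁻¹ * γ = 1 := Matrix.nonsing_inv_mul γ hγ
  have hgmap : g.map ⇑φ = 1 + φ (PowerSeries.X ^ (d' + d'')) • g'.map ⇑φ := by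
    subst hcong
    ext i j
    simp only [Matrix.map_apply, Matrix.add_apply, Matrix.smul_apply, smul_eq_mul, map_add,
      map_mul]
    congr 1
    by_cases hij : i = j <;> simp [hij, Matrix.one_apply]
  have key : γ⁻¹ * g.map ⇑φ * γ = (1 + Pm * g' * Qm).map ⇑φ := by
    have hsingle : φ (PowerSeries.X ^ (d' + d'')) =
        HahnSeries.single ((d'' : ℤ)) (1 : R) * HahnSeries.single ((d' : ℤ)) (1 : R) := by
      rw [hφ, HahnSeries.ofPowerSeries_X_pow, HahnSeries.single_mul_single, one_mul]
      push_cast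
      ring_nf
    rw [hgmap, hsingle, conj_aux γ⁻¹ γ (g'.map ⇑φ) _ _ hinv, ← hQmap, ← hPmap,
      ← Matrix.map_mul, ← Matrix.map_mul, ← Matrix.map_one φ (map_zero φ) (map_one φ),
      ← Matrix.map_add]
    exact fun a b => map_add φ a b
  refine ⟨1 + Pm * g' * Qm, ?_, key⟩
  have hdet : φ (1 + Pm * g' * Qm).det = φ g.det := by
    rw [RingHom.map_det, RingHom.mapMatrix_apply, ← key, RingHom.map_det, RingHom.mapMatrix_apply]
    rw [Matrix.det_mul, Matrix.det_mul]
    have : γ⁻¹.det * γ.det = 1 := by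
      rw [← Matrix.det_mul, hinv, Matrix.det_one]
    calc γ⁻¹.det * (g.map ⇑φ).det * γ.det
        = (g.map ⇑φ).det * (γ⁻¹.det * γ.det) := by ring
      _ = (g.map ⇑φ).det := by rw [this, mul_one]
  have : (1 + Pm * g' * Qm).det = g.det := HahnSeries.ofPowerSeries_injective hdet
  rw [this]
  exact hg
end

section
/- Let K be a field and φ a field automorphism of K, extended coefficientwise to a ring automorphism of K((z)) fixing z. Let a₁, …, a_n be integers and D = diag(z^{a₁}, …, z^{a_n}). If g ∈ GL_n(K((z))) satisfies φ(g) = D⁻¹·g·D (where φ is applied entrywise), then g_{ij} = 0 whenever a_i ≠ a_j; consequently g commutes with D and φ(g) = g, so all entries of g lie in the fixed field K^φ((z)). -/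
/-! Apply the `z`-adic valuation to the entry `φ(g i j) = z^{-a i} · g i j · z^{a j}`. Since `φ`
acts on coefficients and is injective, the left side has the valuation of `g i j`, while the
right side has that valuation shifted by `a j - a i`; so `g i j ≠ 0` forces `a i = a j`. Then `g`
commutes with `D`, and `φ(g) = D⁻¹ g D = g`. -/

namespace HahnSeries

variable {Γ R : Type*}

theorem orderTop_eq_of_support_eq [PartialOrder Γ] [Zero R] {S : Type*} [Zero S]
    {x : HahnSeries Γ R} {y : HahnSeries Γ S} (h : x.support = y.support) :
    x.orderTop = y.orderTop := by
  by_cases hx : x = 0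
  · have hy : y = 0 := by rw [← support_eq_empty_iff, ← h, hx, support_zero]
    rw [hx, hy, orderTop_zero, orderTop_zero]
  · have hy : y ≠ 0 := by rwa [ne_eq, ← support_eq_empty_iff, ← h, support_eq_empty_iff]
    rw [orderTop_of_ne_zero hx, orderTop_of_ne_zero hy]
    congr 1
    simp only [h]

theorem orderTop_map_of_injective [PartialOrder Γ] [Zero R] {S F : Type*} [Zero S]
    [FunLike F R S] [ZeroHomClass F R S] (x : HahnSeries Γ R) {f : F}
    (hf : Function.Injective f) : (x.map f).orderTop = x.orderTop :=
  orderTop_eq_of_support_eq <| by ext g; simp [map_eq_zero_iff f hf]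

section Twist

variable [AddCommMonoid Γ] [LinearOrder Γ] [IsOrderedCancelAddMonoid Γ]
  [Semiring R] [NoZeroDivisors R]

theorem orderTop_single_mul_mul_single {r s : R} (hr : r ≠ 0) (hs : s ≠ 0) (b c : Γ)
    (x : HahnSeries Γ R) :
    (single b r * x * single c s).orderTop = b + x.orderTop + c := by
  rw [orderTop_mul, orderTop_mul, orderTop_single hr, orderTop_single hs]

theorem add_eq_zero_of_map_eq_single_mul_mul_single {F : Type*} [FunLike F R R]
    [ZeroHomClass F R R] {f : F} (hf : Function.Injective f) {x : HahnSeries Γ R} (hx : x ≠ 0)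
    {b c : Γ} {r s : R} (hr : r ≠ 0) (hs : s ≠ 0) (h : x.map f = single b r * x * single c s) :
    b + c = 0 := by
  have horder := congrArg orderTop h
  rw [orderTop_map_of_injective x hf, orderTop_single_mul_mul_single hr hs] at horder
  obtain ⟨k, hk⟩ := WithTop.ne_top_iff_exists.1 (orderTop_ne_top.2 hx)
  rw [← hk] at horder
  norm_cast at horder
  refine add_right_cancel (b := k) ?_
  rw [zero_add, add_right_comm, ← horder]

end Twist

end HahnSeries

theorem Matrix.mul_diagonal_eq_diagonal_mul_of_apply_eq_zero {n α : Type*} [Fintype n]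
    [DecidableEq n] [NonUnitalNonAssocCommSemiring α] {M : Matrix n n α} {d : n → α}
    (h : ∀ i j, d i ≠ d j → M i j = 0) : M * diagonal d = diagonal d * M := by
  ext i j
  rw [mul_diagonal, diagonal_mul]
  by_cases hij : d i = d j
  · rw [hij, mul_comm]
  · rw [h i j hij, zero_mul, mul_zero]

open HahnSeries in
theorem sigma_conjugation_fixed_by_diagonal_general {K : Type*} [Field K] (φ : K ≃+* K)
    {n : ℕ} (a : Fin n → ℤ)
    (Φ : LaurentSeries K →+* LaurentSeries K)
    (hΦ : ∀ (f : LaurentSeries K) (m : ℤ), (Φ f).coeff m = φ (f.coeff m))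
    (g : Matrix (Fin n) (Fin n) (LaurentSeries K))
    (heq : g.map ⇑Φ =
      (Matrix.diagonal fun i => (HahnSeries.single (-(a i)) (1 : K) : LaurentSeries K)) * g *
        (Matrix.diagonal fun i => (HahnSeries.single (a i) (1 : K) : LaurentSeries K))) :
    (∀ i j : Fin n, a i ≠ a j → g i j = 0) ∧
    g * (Matrix.diagonal fun i => (HahnSeries.single (a i) (1 : K) : LaurentSeries K)) =
      (Matrix.diagonal fun i => (HahnSeries.single (a i) (1 : K) : LaurentSeries K)) * g ∧
    g.map ⇑Φ = g ∧
    ∀ (i j : Fin n) (m : ℤ), φ ((g i j).coeff m) = (g i j).coeff m := by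
  have hentry (i j : Fin n) :
      (g i j).map φ = single (-a i) (1 : K) * g i j * single (a j) 1 := by
    have := congrFun₂ heq i j
    rw [Matrix.map_apply, Matrix.mul_diagonal, Matrix.diagonal_mul] at this
    rw [← this]
    ext m
    rw [map_coeff, hΦ]
  have hzero (i j : Fin n) (hij : a i ≠ a j) : g i j = 0 := by
    by_contra hne
    have := add_eq_zero_of_map_eq_single_mul_mul_single φ.injective hne one_ne_zero one_ne_zero
      (hentry i j)
    omega
  have hcomm := Matrix.mul_diagonal_eq_diagonal_mul_of_apply_eq_zero (M := g)
    (d := fun i => (single (a i) (1 : K) : LaurentSeries K))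
    fun i j hd => hzero i j fun ha => hd (by rw [ha])
  have hfix : g.map Φ = g := by
    rw [heq, Matrix.mul_assoc, hcomm, ← Matrix.mul_assoc, Matrix.diagonal_mul_diagonal]
    simp only [single_mul_single, neg_add_cancel, mul_one, single_zero_one, Matrix.diagonal_one,
      Matrix.one_mul]
  refine ⟨hzero, hcomm, hfix, fun i j m => ?_⟩
  rw [← hΦ, ← Matrix.map_apply (f := Φ), hfix]

/-- Let `φ` be a field automorphism of `K`, extended coefficientwise to a ring
endomorphism `Φ` of the Laurent series field `K((z))` fixing `z`, let
`D = diag(z^{a₁}, …, z^{a_n})` and `g ∈ GL_n(K((z)))` with `Φ(g) = D⁻¹·g·D`. Then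
`g i j = 0` whenever `a i ≠ a j`; consequently `g` commutes with `D`, `Φ(g) = g`, and
all coefficients of all entries of `g` are fixed by `φ`. -/
theorem sigma_conjugation_fixed_by_diagonal {K : Type*} [Field K] (φ : K ≃+* K)
    {n : ℕ} (a : Fin n → ℤ)
    (Φ : LaurentSeries K →+* LaurentSeries K)
    (hΦ : ∀ (f : LaurentSeries K) (m : ℤ), (Φ f).coeff m = φ (f.coeff m))
    (g : Matrix (Fin n) (Fin n) (LaurentSeries K)) (hg : IsUnit g.det)
    (heq : g.map ⇑Φ =
      (Matrix.diagonal fun i => (HahnSeries.single (-(a i)) (1 : K) : LaurentSeries K)) * g *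
        (Matrix.diagonal fun i => (HahnSeries.single (a i) (1 : K) : LaurentSeries K))) :
    (∀ i j : Fin n, a i ≠ a j → g i j = 0) ∧
    g * (Matrix.diagonal fun i => (HahnSeries.single (a i) (1 : K) : LaurentSeries K)) =
      (Matrix.diagonal fun i => (HahnSeries.single (a i) (1 : K) : LaurentSeries K)) * g ∧
    g.map ⇑Φ = g ∧
    ∀ (i j : Fin n) (m : ℤ), φ ((g i j).coeff m) = (g i j).coeff m :=
  sigma_conjugation_fixed_by_diagonal_general φ a Φ hΦ g heq
end

section
/- For a commutative ring R and a finitely presented R-module M, the natural map M ⊗_R R[[X]] → M[[X]] sending m ⊗ f to the formal power series with coefficients (coefficient of f)·m is an isomorphism of R[[X]]-modules. -/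
open scoped TensorProduct

/-- The natural `R`-linear map `R[[X]] ⊗_R M → M[[X]]` sending `f ⊗ m` to the power
series with `k`-th coefficient `(coeff k f) • m`.  Here `M[[X]]` is realized as the
module of coefficient sequences `ℕ → M`. -/
noncomputable def tensorPowerSeriesToSeries (R M : Type*) [CommRing R] [AddCommGroup M]
    [Module R M] : PowerSeries R ⊗[R] M →ₗ[R] (ℕ → M) :=
  TensorProduct.lift
    (LinearMap.mk₂ R (fun f m k => PowerSeries.coeff (R := R) k f • m)
      (by intro f f' m; funext k; simp [add_smul]
        )
      (by intro c f m; funext k; simp [mul_smul]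
        )
      (by intro f m m'; funext k; simp [smul_add]
        )
      (by intro c f m; funext k; exact smul_comm _ _ _
        ))

/-- The Cauchy-product action of a power series `f ∈ R[[X]]` on a power series
`g ∈ M[[X]]` with coefficients in an `R`-module `M`. -/
noncomputable def cauchySMul {R M : Type*} [CommRing R] [AddCommGroup M] [Module R M]
    (f : PowerSeries R) (g : ℕ → M) : ℕ → M :=
  fun k => ∑ p ∈ Finset.HasAntidiagonal.antidiagonal k, PowerSeries.coeff (R := R) p.1 f • g p.2

/-!
Both `M ↦ R[[X]] ⊗_R M` and `M ↦ M[[X]]` are right exact functors, and the natural map between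
them is an isomorphism on finite free modules, where it is just the identification of
`R[[X]]^n` with `(R^n)[[X]]`. A finite presentation `R^m → R^n → M → 0` and the five lemma
then give bijectivity for `M`.
-/

theorem Function.Exact.linearMap_compLeft {R M N P : Type*} [Semiring R] [AddCommMonoid M]
    [AddCommMonoid N] [AddCommMonoid P] [Module R M] [Module R N] [Module R P]
    {f : M →ₗ[R] N} {g : N →ₗ[R] P} (hfg : Function.Exact f g) (ι : Type*) :
    Function.Exact (f.compLeft ι) (g.compLeft ι) := by
  intro y
  simp only [LinearMap.compLeft_apply, Set.mem_range, funext_iff, Function.comp_apply,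
    Pi.zero_apply, hfg _]
  exact Classical.skolem

section

variable {R M N : Type*} [CommRing R] [AddCommGroup M] [Module R M] [AddCommGroup N] [Module R N]

@[simp]
theorem tensorPowerSeriesToSeries_tmul (f : PowerSeries R) (m : M) (k : ℕ) :
    tensorPowerSeriesToSeries R M (f ⊗ₜ m) k = PowerSeries.coeff k f • m :=
  rfl

theorem tensorPowerSeriesToSeries_naturality (g : M →ₗ[R] N) :
    g.compLeft ℕ ∘ₗ tensorPowerSeriesToSeries R M =
      tensorPowerSeriesToSeries R N ∘ₗ g.lTensor (PowerSeries R) := by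
  ext f m k
  simp

theorem bijective_powerSeries_coeff_swap (ι : Type*) :
    Function.Bijective fun (F : ι → PowerSeries R) (k : ℕ) (i : ι) => PowerSeries.coeff k (F i) :=
  Function.bijective_iff_has_inverse.mpr
    ⟨fun g i => PowerSeries.mk fun k => g k i, fun F => by ext; simp, fun g => by ext; simp⟩

theorem tensorPowerSeriesToSeries_pi_bijective (ι : Type*) [Finite ι] :
    Function.Bijective (tensorPowerSeriesToSeries R (ι → R)) := by
  cases nonempty_fintype ι
  classical
  have h : ⇑(tensorPowerSeriesToSeries R (ι → R)) =
      (fun F k i => PowerSeries.coeff k (F i)) ∘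
        TensorProduct.piScalarRight R R (PowerSeries R) ι := by
    funext x k i
    induction x using TensorProduct.induction_on with
    | zero => simp
    | tmul f v => simp [mul_comm]
    | add x y hx hy => simp [hx, hy]
  rw [h]
  exact (bijective_powerSeries_coeff_swap ι).comp (LinearEquiv.bijective _)

theorem tensorPowerSeriesToSeries_bijective [Module.FinitePresentation R M] :
    Function.Bijective (tensorPowerSeriesToSeries R M) := by
  obtain ⟨n, m, π, ρ, hπ, hρπ⟩ := Module.FinitePresentation.exists_fin' R M
  exact LinearMap.bijective_of_surjective_of_bijective_of_right_exact
    (ρ.lTensor _) (π.lTensor _) (ρ.compLeft ℕ) (π.compLeft ℕ)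
    (tensorPowerSeriesToSeries R _) (tensorPowerSeriesToSeries R _)
    (tensorPowerSeriesToSeries R M)
    (tensorPowerSeriesToSeries_naturality ρ) (tensorPowerSeriesToSeries_naturality π)
    (lTensor_exact _ hρπ hπ) (hρπ.linearMap_compLeft ℕ)
    (tensorPowerSeriesToSeries_pi_bijective _).2 (tensorPowerSeriesToSeries_pi_bijective _)
    (LinearMap.lTensor_surjective _ hπ) hπ.comp_left

theorem tensorPowerSeriesToSeries_smul (f : PowerSeries R) (x : PowerSeries R ⊗[R] M) :
    tensorPowerSeriesToSeries R M (f • x) = cauchySMul f (tensorPowerSeriesToSeries R M x) := by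
  induction x using TensorProduct.induction_on with
  | zero => ext; simp [cauchySMul]
  | tmul g m =>
    ext k
    simp [TensorProduct.smul_tmul', cauchySMul, PowerSeries.coeff_mul, Finset.sum_smul, mul_smul]
  | add x y hx hy =>
    ext k
    simp [cauchySMul, hx, hy, Finset.sum_add_distrib]

end

/-- For a finitely presented `R`-module `M`, the natural map `M ⊗_R R[[X]] → M[[X]]` is
an isomorphism of `R[[X]]`-modules: it is bijective and transforms the `R[[X]]`-action
on the tensor product into the Cauchy-product action on `M[[X]]`. -/
theorem tensor_powerSeries_iso_of_finitePresentation (R M : Type*) [CommRing R]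
    [AddCommGroup M] [Module R M] [Module.FinitePresentation R M] :
    Function.Bijective (tensorPowerSeriesToSeries R M) ∧
      ∀ (f : PowerSeries R) (x : PowerSeries R ⊗[R] M),
        tensorPowerSeriesToSeries R M (f • x) =
          cauchySMul f (tensorPowerSeriesToSeries R M x) :=
  ⟨tensorPowerSeriesToSeries_bijective, tensorPowerSeriesToSeries_smul⟩
end

section
/- Let R be a commutative ring and S, T commutative R-algebras that are finitely presented as R-modules. Then there is a natural isomorphism of R[[z]]-algebras S[[z]] ⊗_{R[[z]]} T[[z]] ≅ (S ⊗_R T)[[z]]. -/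
/-! The comparison map `S⟦X⟧ ⊗_{R⟦X⟧} T⟦X⟧ → (S ⊗_R T)⟦X⟧` is the product of the two
coefficientwise inclusions. Precomposed with `S ⊗_R T⟦X⟧ → S⟦X⟧ ⊗_{R⟦X⟧} T⟦X⟧`, `s ⊗ g ↦ C s ⊗ g`,
it becomes the natural map `S ⊗_R ∏ₙ T → ∏ₙ (S ⊗_R T)`. That map is bijective because tensoring
with a finitely presented module commutes with arbitrary products (five lemma on a finite
presentation, the free case being clear), and `s ⊗ g ↦ C s ⊗ g` is surjective because, for `S`
finite over `R`, `S⟦X⟧` is spanned over `R⟦X⟧` by the constants. -/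

open scoped TensorProduct

set_option synthInstance.maxHeartbeats 1000000
set_option maxHeartbeats 1000000

/-- `S[[z]]` is an `R[[z]]`-algebra via `PowerSeries.map` of the structure map. -/
noncomputable instance powerSeriesAlgebraOfAlgebra (R S : Type*) [CommRing R] [CommRing S]
    [Algebra R S] : Algebra (PowerSeries R) (PowerSeries S) :=
  (PowerSeries.map (algebraMap R S)).toAlgebra

theorem Function.Exact.piMap {ι : Type*} {A B C : ι → Type*} [∀ i, Zero (C i)]
    {f : ∀ i, A i → B i} {g : ∀ i, B i → C i} (h : ∀ i, Function.Exact (f i) (g i)) :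
    Function.Exact (Pi.map f) (Pi.map g) := by
  intro y
  simp [funext_iff, h _ _, Set.range_piMap]

namespace TensorProduct

variable {R : Type*} [CommRing R] {ι : Type*} (P : ι → Type*)
  [∀ i, AddCommGroup (P i)] [∀ i, Module R (P i)]

theorem piRightHom_bijective_of_free (κ : Type*) [Fintype κ] [DecidableEq κ] :
    Function.Bijective (piRightHom R R (κ → R) P) := by
  let swap : (κ → ∀ i, P i) ≃ₗ[R] ∀ i, κ → P i :=
    { Equiv.piComm _ with map_add' := fun _ _ => rfl, map_smul' := fun _ _ => rfl }
  let eP (i : ι) : (κ → R) ⊗[R] P i ≃ₗ[R] (κ → P i) :=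
    TensorProduct.comm R _ _ ≪≫ₗ piScalarRight R R (P i) κ
  have h : (LinearEquiv.piCongrRight eP).toLinearMap ∘ₗ piRightHom R R (κ → R) P =
      (TensorProduct.comm R _ _ ≪≫ₗ piScalarRight R R _ κ ≪≫ₗ swap).toLinearMap :=
    TensorProduct.ext' fun v p => by ext i k; simp [eP, swap, Function.swap]
  rw [← (LinearEquiv.piCongrRight eP).bijective.of_comp_iff', ← LinearEquiv.coe_coe,
    ← LinearMap.coe_comp, h]
  exact LinearEquiv.bijective _

theorem piRightHom_comp_rTensor {M N : Type*} [AddCommGroup M] [Module R M]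
    [AddCommGroup N] [Module R N] (l : M →ₗ[R] N) :
    piRightHom R R N P ∘ₗ l.rTensor _ =
      LinearMap.piMap (fun i => l.rTensor (P i)) ∘ₗ piRightHom R R M P :=
  TensorProduct.ext' fun _ _ => rfl

theorem piRightHom_bijective (M : Type*) [AddCommGroup M] [Module R M]
    [Module.FinitePresentation R M] :
    Function.Bijective (piRightHom R R M P) := by
  obtain ⟨n, m, f, g, hf, hgf⟩ := Module.FinitePresentation.exists_fin' R M
  exact LinearMap.bijective_of_surjective_of_bijective_of_right_exact
    (g.rTensor _) (f.rTensor _) (LinearMap.piMap fun i => g.rTensor (P i))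
    (LinearMap.piMap fun i => f.rTensor (P i)) _ _ _
    (piRightHom_comp_rTensor P g).symm (piRightHom_comp_rTensor P f).symm
    (rTensor_exact _ hgf hf) (Function.Exact.piMap fun i => rTensor_exact _ hgf hf)
    (piRightHom_bijective_of_free P _).2 (piRightHom_bijective_of_free P _)
    (LinearMap.rTensor_surjective _ hf)
    (Function.Surjective.piMap fun i => LinearMap.rTensor_surjective _ hf)

end TensorProduct

namespace PowerSeries

variable {R S T : Type*} [CommRing R] [CommRing S] [CommRing T] [Algebra R S] [Algebra R T]

theorem smul_eq_map_mul (h : PowerSeries R) (f : PowerSeries S) :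
    h • f = map (algebraMap R S) h * f := rfl

theorem coeff_smul_C (h : PowerSeries R) (s : S) (n : ℕ) :
    coeff n (h • C s) = coeff n h • s := by
  rw [smul_eq_map_mul, coeff_mul_C, coeff_map, Algebra.smul_def]

theorem C_smul_eq_smul (r : R) (f : PowerSeries S) : C r • f = r • f := by
  rw [smul_eq_map_mul, map_C, Algebra.smul_def, algebraMap_apply]

theorem C_smul_C (r : R) (s : S) : C r • C s = C (r • s) := by
  rw [smul_eq_map_mul, map_C, ← map_mul, Algebra.smul_def]

variable (R) in
theorem span_range_C_eq_top [Module.Finite R S] :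
    Submodule.span (PowerSeries R) (Set.range (C : S → PowerSeries S)) = ⊤ := by
  refine eq_top_iff.mpr fun f _ => ?_
  obtain ⟨k, v, hv⟩ := Module.Finite.exists_fin (R := R) (M := S)
  have hcoeff (n : ℕ) : ∃ c : Fin k → R, ∑ j, c j • v j = coeff n f :=
    Submodule.mem_span_range_iff_exists_fun R |>.mp (hv ▸ Submodule.mem_top)
  choose c hc using hcoeff
  have hf : f = ∑ j, mk (fun n => c n j) • C (v j) := by
    ext n
    simp [map_sum, coeff_smul_C, hc]
  rw [hf]
  exact Submodule.sum_mem _ fun j _ =>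
    Submodule.smul_mem _ _ (Submodule.subset_span (Set.mem_range_self _))

noncomputable def mapAlgHomPowerSeries (φ : S →ₐ[R] T) :
    PowerSeries S →ₐ[PowerSeries R] PowerSeries T :=
  { map φ.toRingHom with
    commutes' := fun c => by
      change map _ (map _ c) = map _ c
      rw [← RingHom.comp_apply, ← map_comp]
      congr
      exact RingHom.ext φ.commutes }

variable (R S T)

noncomputable def coeffwiseTensor : S ⊗[R] PowerSeries T →ₗ[R] PowerSeries (S ⊗[R] T) :=
  TensorProduct.piRightHom R R S fun _ => T

theorem coeff_coeffwiseTensor_tmul (s : S) (g : PowerSeries T) (n : ℕ) :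
    coeff n (coeffwiseTensor R S T (s ⊗ₜ g)) = s ⊗ₜ coeff n g := rfl

noncomputable def constTensor :
    S ⊗[R] PowerSeries T →+ PowerSeries S ⊗[PowerSeries R] PowerSeries T :=
  TensorProduct.liftAddHom
    (AddMonoidHom.mk' (fun s : S =>
        (TensorProduct.mk (PowerSeries R) (PowerSeries S) (PowerSeries T) (C s)).toAddMonoidHom)
      fun s s' => by ext; simp)
    fun r s g => by
      change C (r • s) ⊗ₜ g = C s ⊗ₜ (r • g)
      rw [← C_smul_C, ← C_smul_eq_smul, TensorProduct.smul_tmul]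

theorem constTensor_tmul (s : S) (g : PowerSeries T) :
    constTensor R S T (s ⊗ₜ g) = C s ⊗ₜ g := rfl

theorem constTensor_surjective [Module.Finite R S] : Function.Surjective (constTensor R S T) := by
  have htmul (f : PowerSeries S) : ∀ g, f ⊗ₜ[PowerSeries R] g ∈ (constTensor R S T).range := by
    have hf : f ∈ Submodule.span (PowerSeries R) (Set.range C) := by
      simp [span_range_C_eq_top R]
    induction hf using Submodule.span_induction with
    | mem _ h => obtain ⟨s, rfl⟩ := h; exact fun g => ⟨s ⊗ₜ[R] g, rfl⟩
    | zero => simp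
    | add f f' _ _ hf hf' =>
      exact fun g => TensorProduct.add_tmul (R := PowerSeries R) f f' g ▸ add_mem (hf g) (hf' g)
    | smul h f _ hf =>
      exact fun g => TensorProduct.smul_tmul (R := PowerSeries R) h f g ▸ hf (h • g)
  rw [← AddMonoidHom.range_eq_top, eq_top_iff]
  rintro x -
  induction x with
  | zero => exact zero_mem _
  | tmul f g => exact htmul f g
  | add x y hx hy => exact add_mem hx hy

noncomputable def tensorAlgHom :
    PowerSeries S ⊗[PowerSeries R] PowerSeries T →ₐ[PowerSeries R] PowerSeries (S ⊗[R] T) :=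
  Algebra.TensorProduct.productMap (mapAlgHomPowerSeries Algebra.TensorProduct.includeLeft)
    (mapAlgHomPowerSeries Algebra.TensorProduct.includeRight)

theorem tensorAlgHom_tmul (f : PowerSeries S) (g : PowerSeries T) :
    tensorAlgHom R S T (f ⊗ₜ g) =
      map (Algebra.TensorProduct.includeLeftRingHom (R := R) (A := S) (B := T)) f *
        map (Algebra.TensorProduct.includeRight (R := R) (A := S) (B := T)).toRingHom g :=
  rfl

theorem tensorAlgHom_constTensor (x : S ⊗[R] PowerSeries T) :
    tensorAlgHom R S T (constTensor R S T x) = coeffwiseTensor R S T x := by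
  induction x with
  | zero => simp
  | add x y hx hy => simp [hx, hy]
  | tmul s g =>
    ext n
    simp [tensorAlgHom_tmul, constTensor_tmul, coeff_map, coeff_coeffwiseTensor_tmul]

theorem coeffwiseTensor_bijective [Module.FinitePresentation R S] :
    Function.Bijective (coeffwiseTensor R S T) :=
  TensorProduct.piRightHom_bijective _ S

theorem tensorAlgHom_bijective [Module.FinitePresentation R S] :
    Function.Bijective (tensorAlgHom R S T) := by
  have hcomp : tensorAlgHom R S T ∘ constTensor R S T = coeffwiseTensor R S T :=
    funext (tensorAlgHom_constTensor R S T)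
  have hbij := coeffwiseTensor_bijective R S T
  rw [← hcomp] at hbij
  exact (Function.Bijective.of_comp_iff _
    ⟨hbij.injective.of_comp, constTensor_surjective R S T⟩).mp hbij

end PowerSeries

theorem powerSeries_tensor_powerSeries_general (R S T : Type*) [CommRing R] [CommRing S]
    [CommRing T] [Algebra R S] [Algebra R T]
    [Module.FinitePresentation R S] :
    ∃ e : (PowerSeries S ⊗[PowerSeries R] PowerSeries T) ≃+* PowerSeries (S ⊗[R] T),
      (∀ (f : PowerSeries S) (g : PowerSeries T),
        e (f ⊗ₜ[PowerSeries R] g) =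
          PowerSeries.map (Algebra.TensorProduct.includeLeftRingHom (R := R) (A := S) (B := T)) f *
            PowerSeries.map
              (Algebra.TensorProduct.includeRight (R := R) (A := S) (B := T)).toRingHom g) ∧
      ∀ c : PowerSeries R,
        e (algebraMap (PowerSeries R) (PowerSeries S ⊗[PowerSeries R] PowerSeries T) c) =
          PowerSeries.map (algebraMap R (S ⊗[R] T)) c :=
  ⟨RingEquiv.ofBijective _ (PowerSeries.tensorAlgHom_bijective R S T),
    PowerSeries.tensorAlgHom_tmul R S T, (PowerSeries.tensorAlgHom R S T).commutes⟩

/-- For commutative `R`-algebras `S, T` that are finitely presented as `R`-modules, the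
natural map gives an isomorphism of `R[[z]]`-algebras
`S[[z]] ⊗_{R[[z]]} T[[z]] ≅ (S ⊗_R T)[[z]]`. -/
theorem powerSeries_tensor_powerSeries (R S T : Type*) [CommRing R] [CommRing S]
    [CommRing T] [Algebra R S] [Algebra R T]
    [Module.FinitePresentation R S] [Module.FinitePresentation R T] :
    ∃ e : (PowerSeries S ⊗[PowerSeries R] PowerSeries T) ≃+* PowerSeries (S ⊗[R] T),
      (∀ (f : PowerSeries S) (g : PowerSeries T),
        e (f ⊗ₜ[PowerSeries R] g) =
          PowerSeries.map (Algebra.TensorProduct.includeLeftRingHom (R := R) (A := S) (B := T)) f *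
            PowerSeries.map
              (Algebra.TensorProduct.includeRight (R := R) (A := S) (B := T)).toRingHom g) ∧
      ∀ c : PowerSeries R,
        e (algebraMap (PowerSeries R) (PowerSeries S ⊗[PowerSeries R] PowerSeries T) c) =
          PowerSeries.map (algebraMap R (S ⊗[R] T)) c :=
  powerSeries_tensor_powerSeries_general R S T
end
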